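/- Let D be a k-periodic alphabet. Then D is minimal if and only if the restriction σᵏ|_{D∪B} is l-primitive, i.e., there exists n ≥ 1 such that for all a, b ∈ D, a occurs in σ^{kn}(b). -/

import Mathlib

open List
open scoped Classical

namespace SubstPaper

variable {A : Type*}

/-- Apply a substitution letterwise to a word. -/
def applyW (σ : A → List A) (u : List A) : List A := u.flatMap σ

/-- `n`-th iterate of a substitution on a word. -/
def iterW (σ : A → List A) (n : ℕ) (u : List A) : List A := (applyW σ)^[n] u

/-- Non-erasing substitution. -/
def NonErasing (σ : A → List A) : Prop := ∀ a, σ a ≠ []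

/-- A letter is bounded if the lengths of its iterated images stay bounded. -/
def IsBounded (σ : A → List A) (a : A) : Prop := ∃ K, ∀ n, (iterW σ n [a]).length ≤ K

/-- A letter is growing if it is not bounded. -/
def IsGrowing (σ : A → List A) (a : A) : Prop := ¬ IsBounded σ a

/-- The prefix of `u` consisting of bounded letters, before the first growing letter. -/
noncomputable def LBw (σ : A → List A) (u : List A) : List A :=
  u.takeWhile (fun a => decide (IsBounded σ a))

/-- The first growing letter of `u` (junk value if none). -/
noncomputable def LCw [Inhabited A] (σ : A → List A) (u : List A) : A :=
  (u.dropWhile (fun a => decide (IsBounded σ a))).headI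

/-- The bounded suffix of `u`, after the last growing letter. -/
noncomputable def RBw (σ : A → List A) (u : List A) : List A :=
  (LBw σ u.reverse).reverse

/-- The last growing letter of `u` (junk value if none). -/
noncomputable def RCw [Inhabited A] (σ : A → List A) (u : List A) : A :=
  LCw σ u.reverse

/-- Growing letters occurring in a word. -/
def alphC (σ : A → List A) (u : List A) : Set A := {c | IsGrowing σ c ∧ c ∈ u}

/-- The map on alphabets induced by the substitution: `D ↦ ⋃_{a ∈ D} alph_C(σ(a))`. -/
def FAlph (σ : A → List A) (D : Set A) : Set A := ⋃ a ∈ D, alphC σ (σ a)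

/-- `D` is a `k`-periodic alphabet: nonempty set of growing letters, `k` least positive
with `F^[k] D = D`. -/
def IsKPeriodicAlph (σ : A → List A) (D : Set A) (k : ℕ) : Prop :=
  D.Nonempty ∧ (∀ a ∈ D, IsGrowing σ a) ∧ 0 < k ∧ (FAlph σ)^[k] D = D ∧
    ∀ j, 0 < j → (FAlph σ)^[j] D = D → k ≤ j

/-- `D` is a minimal alphabet: periodic with no proper nonempty periodic subalphabet. -/
def IsMinimalAlph (σ : A → List A) (D : Set A) : Prop :=
  (∃ k, IsKPeriodicAlph σ D k) ∧
    ∀ D' ⊆ D, D'.Nonempty → (∃ k', IsKPeriodicAlph σ D' k') → D' = D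

/-- The finite word `u` occurs in the bi-infinite word `x`. -/
def OccursIn (x : ℤ → A) (u : List A) : Prop :=
  ∃ i : ℤ, ∀ j : Fin u.length, x (i + j.1) = u.get j

/-- The substitution subshift `X_σ`. -/
def Xsub (σ : A → List A) : Set (ℤ → A) :=
  {x | ∀ u, OccursIn x u → ∃ a n, u <:+: iterW σ n [a]}

/-- The left shift on bi-infinite words. -/
def shiftT (x : ℤ → A) : ℤ → A := fun i => x (i + 1)

/-- A subshift: nonempty, closed, shift-invariant. -/
def IsSubshift [TopologicalSpace A] (X : Set (ℤ → A)) : Prop :=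
  X.Nonempty ∧ IsClosed X ∧ shiftT '' X = X

/-- A minimal subshift: contains no proper subshift. -/
def IsMinimalSubshift [TopologicalSpace A] (X : Set (ℤ → A)) : Prop :=
  IsSubshift X ∧ ∀ Y ⊆ X, IsSubshift Y → Y = X

/-- The periodic bi-infinite word `ωuω`. -/
noncomputable def perWord [Inhabited A] (u : List A) : ℤ → A :=
  fun i => u.getD ((i % (u.length : ℤ)).toNat) default

/-- The shift-orbit closure `X(x)` of a bi-infinite word. -/
def orbitClosure [TopologicalSpace A] (x : ℤ → A) : Set (ℤ → A) :=
  closure {y | ∃ k : ℤ, ∀ i, y i = x (i + k)}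

/-- `x` is the letterwise image of `y` under `σ`, with the origin at the image of
position `0`. -/
def IsSubstImage (σ : A → List A) (y x : ℤ → A) : Prop :=
  ∃ c : ℤ → ℤ, c 0 = 0 ∧ (∀ i, c (i + 1) = c i + (σ (y i)).length) ∧
    ∀ i : ℤ, ∀ j : Fin (σ (y i)).length, x (c i + j.1) = (σ (y i)).get j

/-- The induced map `σ̃` on subshifts: all shifts of images of elements of `X`. -/
def tildeS (σ : A → List A) (X : Set (ℤ → A)) : Set (ℤ → A) :=
  {z | ∃ x ∈ X, ∃ k : ℤ, IsSubstImage σ x (fun i => z (i + k))}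

/-- Growing letters occurring in some element of `X`. -/
def alphCX (σ : A → List A) (X : Set (ℤ → A)) : Set A :=
  {c | IsGrowing σ c ∧ ∃ x ∈ X, ∃ i : ℤ, x i = c}

/-- The subshift of the restriction `σᵏ|_E` (words whose factors occur in some
`σ^{kn}(a)`, `a ∈ E`). -/
def Xrestr (σ : A → List A) (E : Set A) (k : ℕ) : Set (ℤ → A) :=
  {x | ∀ u, OccursIn x u → ∃ a ∈ E, ∃ n, u <:+: iterW σ (k * n) [a]}

/-- A growing letter `c` is left-isolated: `σⁿ(c) = u c v` with `u` nonempty bounded. -/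
def LeftIsolated (σ : A → List A) (c : A) : Prop :=
  IsGrowing σ c ∧ ∃ n, 1 ≤ n ∧ ∃ u v : List A, u ≠ [] ∧ (∀ b ∈ u, IsBounded σ b) ∧
    iterW σ n [c] = u ++ c :: v

/-- A growing letter `c` is right-isolated: `σⁿ(c) = v c u` with `u` nonempty bounded. -/
def RightIsolated (σ : A → List A) (c : A) : Prop :=
  IsGrowing σ c ∧ ∃ n, 1 ≤ n ∧ ∃ u v : List A, u ≠ [] ∧ (∀ b ∈ u, IsBounded σ b) ∧
    iterW σ n [c] = v ++ c :: u

/-- Growing letter that is neither left- nor right-isolated (member of `C_niso`). -/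
def NonIsolated (σ : A → List A) (c : A) : Prop :=
  IsGrowing σ c ∧ ¬ LeftIsolated σ c ∧ ¬ RightIsolated σ c

/-- A periodic letter: bounded, and occurring in some `σⁿ(a)`, `n ≥ 1`. -/
def IsPeriodicLetter (σ : A → List A) (a : A) : Prop :=
  IsBounded σ a ∧ ∃ n, 1 ≤ n ∧ [a] <:+: iterW σ n [a]

/-- `(a,u,b)` is a 1-block of the word `w`. -/
def Is1Block (σ : A → List A) (w : List A) (t : A × List A × A) : Prop :=
  IsGrowing σ t.1 ∧ IsGrowing σ t.2.2 ∧ (∀ x ∈ t.2.1, IsBounded σ x) ∧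
    (t.1 :: (t.2.1 ++ [t.2.2])) <:+: w

/-- The descendant map on 1-blocks. -/
noncomputable def Desc [Inhabited A] (σ : A → List A) : A × List A × A → A × List A × A :=
  fun t => (RCw σ (σ t.1), RBw σ (σ t.1) ++ applyW σ t.2.1 ++ LBw σ (σ t.2.2), LCw σ (σ t.2.2))

/-- The bi-infinite word `ωu.wvω`. -/
noncomputable def biWord [Inhabited A] (u w v : List A) : ℤ → A := fun i =>
  if i < 0 then u.getD ((i % (u.length : ℤ)).toNat) default
  else if i < (w.length : ℤ) then w.getD i.toNat default
  else v.getD (((i - (w.length : ℤ)) % (v.length : ℤ)).toNat) default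


lemma iterW_zero (σ : A → List A) (u : List A) : iterW σ 0 u = u := rfl

lemma iterW_succ (σ : A → List A) (n : ℕ) (u : List A) :
    iterW σ (n + 1) u = iterW σ n (applyW σ u) := by
  simp [iterW, Function.iterate_succ_apply]

lemma applyW_append (σ : A → List A) (u v : List A) :
    applyW σ (u ++ v) = applyW σ u ++ applyW σ v := List.flatMap_append

lemma iterW_append (σ : A → List A) (n : ℕ) (u v : List A) :
    iterW σ n (u ++ v) = iterW σ n u ++ iterW σ n v := by
  induction n generalizing u v with
  | zero => rfl
  | succ m ih => rw [iterW_succ, iterW_succ, iterW_succ, applyW_append, ih]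

lemma applyW_singleton (σ : A → List A) (a : A) : applyW σ [a] = σ a := by
  simp [applyW]

lemma length_le_of_mem (σ : A → List A) {c : A} {u : List A} (hc : c ∈ u) (n : ℕ) :
    (iterW σ n [c]).length ≤ (iterW σ n u).length := by
  obtain ⟨s, t, rfl⟩ := List.append_of_mem hc
  have : s ++ c :: t = s ++ [c] ++ t := by simp
  rw [this, iterW_append, iterW_append]
  simp only [List.length_append]
  omega

lemma bounded_of_mem_bounded (σ : A → List A) {b c : A} (hb : IsBounded σ b)
    (hc : c ∈ σ b) : IsBounded σ c := by
  obtain ⟨K, hK⟩ := hb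
  refine ⟨K, fun n => ?_⟩
  calc (iterW σ n [c]).length ≤ (iterW σ n (σ b)).length := length_le_of_mem σ hc n
    _ = (iterW σ (n + 1) [b]).length := by rw [iterW_succ, applyW_singleton]
    _ ≤ K := hK (n + 1)

lemma iterW_nil (σ : A → List A) (n : ℕ) : iterW σ n ([] : List A) = [] := by
  induction n with
  | zero => rfl
  | succ m ih => rw [iterW_succ]; simpa [applyW] using ih

lemma bounded_word (σ : A → List A) (u : List A) (h : ∀ c ∈ u, IsBounded σ c) :
    ∃ K, ∀ n, (iterW σ n u).length ≤ K := by
  induction u with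
  | nil => exact ⟨0, fun n => by simp [iterW_nil]⟩
  | cons a u ih =>
    obtain ⟨K1, hK1⟩ := h a (by simp)
    obtain ⟨K2, hK2⟩ := ih (fun c hc => h c (by simp [hc]))
    refine ⟨K1 + K2, fun n => ?_⟩
    have : (a :: u) = [a] ++ u := rfl
    rw [this, iterW_append]
    simp only [List.length_append]
    exact Nat.add_le_add (hK1 n) (hK2 n)

lemma exists_growing_mem (σ : A → List A) {a : A} (ha : IsGrowing σ a) :
    ∃ c ∈ σ a, IsGrowing σ c := by
  by_contra h
  push_neg at h
  simp only [IsGrowing, not_not] at h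
  obtain ⟨K, hK⟩ := bounded_word σ (σ a) h
  exact ha ⟨max K 1, fun n => by
    cases n with
    | zero => simp [iterW_zero]
    | succ m =>
      rw [iterW_succ, applyW_singleton]
      exact le_trans (hK m) (le_max_left _ _)⟩

lemma FAlph_mono (σ : A → List A) : Monotone (FAlph σ) := by
  intro S T h c hc
  simp only [FAlph, Set.mem_iUnion] at hc ⊢
  obtain ⟨a, ha, hca⟩ := hc
  exact ⟨a, h ha, hca⟩

lemma alphC_applyW (σ : A → List A) (u : List A) :
    alphC σ (applyW σ u) = FAlph σ (alphC σ u) := by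
  ext c
  simp only [alphC, FAlph, Set.mem_setOf_eq, Set.mem_iUnion, applyW, List.mem_flatMap]
  constructor
  · rintro ⟨hc, a, ha, hca⟩
    refine ⟨a, ⟨?_, ha⟩, hc, hca⟩
    intro hab
    exact hc (bounded_of_mem_bounded σ hab hca)
  · rintro ⟨a, ⟨hg, ha⟩, hc, hca⟩
    exact ⟨hc, a, ha, hca⟩

lemma alphC_iterW (σ : A → List A) (m : ℕ) (u : List A) :
    alphC σ (iterW σ m u) = (FAlph σ)^[m] (alphC σ u) := by
  induction m generalizing u with
  | zero => rfl
  | succ p ih =>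
    rw [iterW_succ, ih, alphC_applyW, Function.iterate_succ_apply]

lemma alphC_singleton (σ : A → List A) {a : A} (ha : IsGrowing σ a) :
    alphC σ [a] = {a} := by
  ext c
  simp only [alphC, Set.mem_setOf_eq, List.mem_singleton, Set.mem_singleton_iff]
  constructor
  · rintro ⟨_, rfl⟩; rfl
  · rintro rfl; exact ⟨ha, rfl⟩

lemma mem_FAlph_growing (σ : A → List A) {S : Set A} {c : A} (h : c ∈ FAlph σ S) :
    IsGrowing σ c := by
  simp only [FAlph, Set.mem_iUnion, alphC, Set.mem_setOf_eq] at h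
  obtain ⟨a, _, hg, _⟩ := h
  exact hg

lemma FAlph_iter_growing (σ : A → List A) {S : Set A} (hS : ∀ a ∈ S, IsGrowing σ a)
    (m : ℕ) : ∀ a ∈ (FAlph σ)^[m] S, IsGrowing σ a := by
  induction m with
  | zero => exact hS
  | succ p ih =>
    rw [Function.iterate_succ_apply']
    exact fun a ha => mem_FAlph_growing σ ha

lemma FAlph_iter_nonempty (σ : A → List A) {S : Set A} (hS : ∀ a ∈ S, IsGrowing σ a)
    (hne : S.Nonempty) (m : ℕ) : ((FAlph σ)^[m] S).Nonempty := by
  induction m with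
  | zero => exact hne
  | succ p ih =>
    rw [Function.iterate_succ_apply']
    obtain ⟨a, ha⟩ := ih
    have hg := FAlph_iter_growing σ hS p a ha
    obtain ⟨c, hc, hcg⟩ := exists_growing_mem σ hg
    exact ⟨c, Set.mem_biUnion ha ⟨hcg, hc⟩⟩

lemma iter_fix_mul (σ : A → List A) {S : Set A} {j : ℕ} (h : (FAlph σ)^[j] S = S)
    (s : ℕ) : (FAlph σ)^[j * s] S = S := by
  induction s with
  | zero => simp
  | succ p ih =>
    have : j * (p + 1) = j * p + j := by ring
    rw [this, Function.iterate_add_apply, h, ih]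

lemma singleton_infix_iff {a : A} {l : List A} : [a] <:+: l ↔ a ∈ l := by
  constructor
  · intro h; exact h.subset (List.mem_singleton_self a)
  · intro h
    obtain ⟨s, t, rfl⟩ := List.append_of_mem h
    exact ⟨s, t, by simp⟩

/-- Membership translation: for growing `b`, `[a] <:+: σ^m(b)` iff `a ∈ F^[m] {b}`,
provided `a` is growing. -/
lemma infix_iff_mem_iter (σ : A → List A) {a b : A} (ha : IsGrowing σ a)
    (hb : IsGrowing σ b) (m : ℕ) :
    [a] <:+: iterW σ m [b] ↔ a ∈ (FAlph σ)^[m] {b} := by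
  rw [singleton_infix_iff]
  have h1 : (FAlph σ)^[m] {b} = alphC σ (iterW σ m [b]) := by
    rw [alphC_iterW, alphC_singleton σ hb]
  rw [h1]
  simp only [alphC, Set.mem_setOf_eq]
  exact ⟨fun h => ⟨ha, h⟩, fun h => h.2⟩
/-- A `k`-periodic alphabet `D` is minimal iff `σᵏ|_{D∪B}` is l-primitive, i.e.,
there is `n ≥ 1` with `a ⊑ σ^{kn}(b)` for all `a, b ∈ D`. -/
theorem stmt8 [Fintype A] (σ : A → List A) (hσ : NonErasing σ)
    (D : Set A) (k : ℕ) (hk : IsKPeriodicAlph σ D k) :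
    IsMinimalAlph σ D ↔
      ∃ n, 1 ≤ n ∧ ∀ a ∈ D, ∀ b ∈ D, [a] <:+: iterW σ (k * n) [b] := by
  obtain ⟨hne, hgrow, hkpos, hfix, hleast⟩ := hk
  constructor
  · intro hmin
    have key : ∀ b ∈ D, ∃ p, ∀ m, p ≤ m → (FAlph σ)^[k * m] {b} = D := by
      intro b hb
      have hgb : ∀ a ∈ ({b} : Set A), IsGrowing σ a := by
        intro a ha
        rw [Set.mem_singleton_iff] at ha
        exact ha ▸ hgrow b hb
      obtain ⟨p, q, hlt, heq⟩ : ∃ p q, p < q ∧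
          (FAlph σ)^[k * p] ({b} : Set A) = (FAlph σ)^[k * q] ({b} : Set A) := by
        obtain ⟨p, q, hpq, heq⟩ := Finite.exists_ne_map_eq_of_infinite
          (fun m : ℕ => (FAlph σ)^[k * m] ({b} : Set A))
        rcases lt_or_gt_of_ne hpq with h | h
        · exact ⟨p, q, h, heq⟩
        · exact ⟨q, p, h, heq.symm⟩
      set E := (FAlph σ)^[k * p] ({b} : Set A) with hE
      have hEsub : E ⊆ D := by
        have h1 : ({b} : Set A) ⊆ D := Set.singleton_subset_iff.mpr hb
        have h2 := (FAlph_mono σ).iterate (k * p) h1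
        calc E ⊆ (FAlph σ)^[k * p] D := h2
          _ = D := iter_fix_mul σ hfix p
      have hEne : E.Nonempty := FAlph_iter_nonempty σ hgb ⟨b, rfl⟩ (k * p)
      have hEgrow : ∀ a ∈ E, IsGrowing σ a := FAlph_iter_growing σ hgb (k * p)
      have hEper : (FAlph σ)^[k * (q - p)] E = E := by
        rw [hE, ← Function.iterate_add_apply]
        have h3 : k * (q - p) + k * p = k * q := by
          rw [← Nat.mul_add, Nat.sub_add_cancel hlt.le]
        rw [h3, ← heq]
      have hex : ∃ j, 0 < j ∧ (FAlph σ)^[j] E = E := by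
        refine ⟨k * (q - p), ?_, hEper⟩
        have : 0 < q - p := by omega
        positivity
      have hED : E = D := by
        refine hmin.2 E hEsub hEne ⟨Nat.find hex, hEne, hEgrow,
          (Nat.find_spec hex).1, (Nat.find_spec hex).2, fun j hj hfj => ?_⟩
        exact Nat.find_min' hex ⟨hj, hfj⟩
      refine ⟨p, fun m hm => ?_⟩
      have h4 : k * m = k * (m - p) + k * p := by
        rw [← Nat.mul_add, Nat.sub_add_cancel hm]
      rw [h4, Function.iterate_add_apply, ← hE, hED]
      exact iter_fix_mul σ hfix (m - p)
    choose P hP using key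
    classical
    set g : A → ℕ := fun b => if h : b ∈ D then P b h else 0 with hg
    refine ⟨Finset.univ.sup g + 1, le_add_self, fun a ha b hb => ?_⟩
    rw [infix_iff_mem_iter σ (hgrow a ha) (hgrow b hb)]
    have h5 : P b hb ≤ Finset.univ.sup g + 1 := by
      have : g b = P b hb := dif_pos hb
      have h6 : g b ≤ Finset.univ.sup g := Finset.le_sup (Finset.mem_univ b)
      omega
    rw [hP b hb _ h5]
    exact ha
  · rintro ⟨n, hn1, hprim⟩
    refine ⟨⟨k, hne, hgrow, hkpos, hfix, hleast⟩, fun D' hsub hne' hper => ?_⟩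
    obtain ⟨k', _, hgrow', hk'pos, hfix', _⟩ := hper
    obtain ⟨b, hb⟩ := hne'
    have hbD : b ∈ D := hsub hb
    have hDsub : D ⊆ (FAlph σ)^[k * n] {b} := fun a ha =>
      (infix_iff_mem_iter σ (hgrow a ha) (hgrow b hbD) (k * n)).mp (hprim a ha b hbD)
    have h2 : (FAlph σ)^[k * n * (k' - 1)] D ⊆
        (FAlph σ)^[k * n * (k' - 1)] ((FAlph σ)^[k * n] ({b} : Set A)) :=
      (FAlph_mono σ).iterate (k * n * (k' - 1)) hDsub
    have h3 : (FAlph σ)^[k * n * (k' - 1)] D = D := by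
      have h : k * n * (k' - 1) = k * (n * (k' - 1)) := by ring
      rw [h]; exact iter_fix_mul σ hfix _
    have h4 : (FAlph σ)^[k * n * (k' - 1)] ((FAlph σ)^[k * n] ({b} : Set A)) =
        (FAlph σ)^[k * n * k'] ({b} : Set A) := by
      rw [← Function.iterate_add_apply]
      congr 1
      have h : k' - 1 + 1 = k' := Nat.sub_add_cancel hk'pos
      calc k * n * (k' - 1) + k * n = k * n * ((k' - 1) + 1) := by ring
        _ = k * n * k' := by rw [h]
    have h5 : (FAlph σ)^[k * n * k'] ({b} : Set A) ⊆ D' := by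
      have hb' : ({b} : Set A) ⊆ D' := Set.singleton_subset_iff.mpr hb
      refine ((FAlph_mono σ).iterate (k * n * k') hb').trans ?_
      have h : k * n * k' = k' * (k * n) := by ring
      rw [h, iter_fix_mul σ hfix' (k * n)]
    refine Set.Subset.antisymm hsub ?_
    calc D = (FAlph σ)^[k * n * (k' - 1)] D := h3.symm
      _ ⊆ (FAlph σ)^[k * n * k'] ({b} : Set A) := h4 ▸ h2
      _ ⊆ D' := h5


end SubstPaper
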